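/- arXiv:1909.11347 — 5 statements merged into one kernel-verified Lean document; each statement's English description precedes it below -/
import Mathlib

section
/- Let L be a topological vector lattice, u : L → L the map u(x) = x ⊔ 0, C ⊆ L a convex subset, and D = u(C) with the subspace topology. Then the restriction u|_C : C → D is a compressive continuous surjection. -/
/-- `(V', V)` is a compressive pair for `f`: both sets are open, `V' ⊆ V`, and
`f⁻¹(V')` is contractible in `f⁻¹(V)`. -/
def IsCompressivePair {X Y : Type*} [TopologicalSpace X] [TopologicalSpace Y]
    (f : X → Y) (V' V : Set Y) : Prop :=
  IsOpen V' ∧ IsOpen V ∧ V' ⊆ V ∧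
    ∃ ξ : (f ⁻¹' V') × unitInterval → (f ⁻¹' V),
      Continuous ξ ∧
      (∀ x : f ⁻¹' V', ((ξ (x, 0) : X) = (x : X))) ∧
      ∃ c : f ⁻¹' V, ∀ x : f ⁻¹' V', ξ (x, 1) = c

/-- `f` is compressive: for every `y ∈ Y` and every open neighborhood `V` of `y`
there is an open neighborhood `V'` of `y` such that `(V', V)` is a compressive
pair for `f`. -/
def IsCompressive {X Y : Type*} [TopologicalSpace X] [TopologicalSpace Y]
    (f : X → Y) : Prop :=
  ∀ (y : Y) (V : Set Y), IsOpen V → y ∈ V →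
    ∃ V' : Set Y, y ∈ V' ∧ IsCompressivePair f V' V


/-!
In a Riesz space `x ↦ x⁺` is monotone and commutes with `⊔` and `⊓` (distributivity), so it
maps the segment `[x, c]`, which lies in the order interval `[x ⊓ c, x ⊔ c]`, into
`[x⁺ ⊓ c⁺, x⁺ ⊔ c⁺]`; hence `|z⁺ - c⁺| ≤ |x⁺ - c⁺|` for every `z` on the segment. Given
`y = c⁺` and a solid neighbourhood `S` of `0` with `y + S` inside the target neighbourhood, the
straight-line homotopy to `c` therefore contracts the fibre over `y + interior S` without
leaving the fibre over `y + S`.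
-/

open Set Topology
open scoped Interval

theorem Set.sup_mem_uIcc_sup {α : Type*} [DistribLattice α] {a b x : α} (h : x ∈ [[a, b]])
    (c : α) : x ⊔ c ∈ [[a ⊔ c, b ⊔ c]] :=
  ⟨by rw [← sup_inf_right]; exact sup_le_sup_right h.1 c,
    by rw [← sup_sup_distrib_right]; exact sup_le_sup_right h.2 c⟩

section LatticeOrderedGroup

variable {L : Type*} [AddCommGroup L] [Lattice L] [IsOrderedAddMonoid L]

theorem abs_sub_left_le_of_mem_uIcc {a b c : L} (h : c ∈ [[a, b]]) : |c - a| ≤ |b - a| := by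
  rw [← sup_sub_inf_eq_abs_sub a b]
  refine abs_le'.2 ⟨sub_le_sub h.2 inf_le_left, ?_⟩
  rw [neg_sub]
  exact sub_le_sub le_sup_left h.1

theorem posPart_mem_uIcc {a b x : L} (h : x ∈ [[a, b]]) : x⁺ ∈ [[a⁺, b⁺]] :=
  letI := AddCommGroup.toDistribLattice L
  Set.sup_mem_uIcc_sup h 0

theorem segment_subset_uIcc_of_lattice {𝕜 : Type*} [Semiring 𝕜] [PartialOrder 𝕜] [Module 𝕜 L]
    [PosSMulMono 𝕜 L] (a b : L) : segment 𝕜 a b ⊆ [[a, b]] :=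
  (convex_Icc _ _).segment_subset left_mem_uIcc right_mem_uIcc

theorem abs_posPart_sub_le_of_mem_segment {𝕜 : Type*} [Semiring 𝕜] [PartialOrder 𝕜]
    [Module 𝕜 L] [PosSMulMono 𝕜 L] {c x z : L} (hz : z ∈ segment 𝕜 c x) :
    |z⁺ - c⁺| ≤ |x⁺ - c⁺| :=
  abs_sub_left_le_of_mem_uIcc (posPart_mem_uIcc (segment_subset_uIcc_of_lattice c x hz))

end LatticeOrderedGroup

section Topological

variable {E Y : Type*} [AddCommGroup E] [Module ℝ E] [TopologicalSpace E] [ContinuousAdd E]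
  [ContinuousSMul ℝ E] [TopologicalSpace Y]

theorem Convex.isCompressivePair_of_segment {C : Set E} (hC : Convex ℝ C) {f : C → Y}
    {V' V : Set Y} (hV' : IsOpen V') (hV : IsOpen V) (hV'V : V' ⊆ V) {c : C} (hc : f c ∈ V')
    (hseg : ∀ x z : C, f x ∈ V' → (z : E) ∈ segment ℝ (x : E) c → f z ∈ V) :
    IsCompressivePair f V' V := by
  have hmem : ∀ (x : C) (t : unitInterval), (1 - (t : ℝ)) • (x : E) + (t : ℝ) • (c : E) ∈ C :=
    fun x t => hC x.2 c.2 (unitInterval.one_minus_nonneg t) t.2.1 (sub_add_cancel 1 _)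
  have hseg' : ∀ (x : f ⁻¹' V') (t : unitInterval), f ⟨_, hmem x t⟩ ∈ V := fun x t =>
    hseg x _ x.2 ⟨1 - t, t, unitInterval.one_minus_nonneg t, t.2.1, sub_add_cancel 1 _, rfl⟩
  refine ⟨hV', hV, hV'V, fun p => ⟨⟨_, hmem p.1 p.2⟩, hseg' p.1 p.2⟩, by fun_prop,
    fun x => by simp, ⟨⟨c, hV'V hc⟩, fun x => by ext; simp⟩⟩

end Topological

section TopologicalVectorLattice

variable {L : Type*} [AddCommGroup L] [Lattice L] [TopologicalSpace L] [IsTopologicalAddGroup L]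

theorem exists_isOpen_forall_abs_sub_le_mem
    (hsolid : ∀ U ∈ 𝓝 (0 : L), ∃ S ∈ 𝓝 (0 : L), S ⊆ U ∧ ∀ x y : L, y ∈ S → |x| ≤ |y| → x ∈ S)
    {y : L} {W : Set L} (hW : W ∈ 𝓝 y) :
    ∃ V' : Set L, IsOpen V' ∧ y ∈ V' ∧ ∀ d ∈ V', ∀ z, |z - y| ≤ |d - y| → z ∈ W := by
  have hU : (· + y) ⁻¹' W ∈ 𝓝 (0 : L) :=
    (continuous_add_const y).continuousAt.preimage_mem_nhds (by rwa [zero_add])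
  obtain ⟨S, hS, hSU, hS_solid⟩ := hsolid _ hU
  refine ⟨(· - y) ⁻¹' interior S, isOpen_interior.preimage (continuous_sub_right y), ?_,
    fun d hd z hzd => ?_⟩
  · simpa only [mem_preimage, sub_self] using mem_interior_iff_mem_nhds.2 hS
  · simpa using hSU (hS_solid _ _ (interior_subset hd) hzd)

theorem Convex.isCompressive_posPart [IsOrderedAddMonoid L] [Module ℝ L] [PosSMulMono ℝ L]
    [ContinuousSMul ℝ L]
    (hsolid : ∀ U ∈ 𝓝 (0 : L), ∃ S ∈ 𝓝 (0 : L), S ⊆ U ∧ ∀ x y : L, y ∈ S → |x| ≤ |y| → x ∈ S)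
    {C D : Set L} (hC : Convex ℝ C) {f : C → D} (hf : ∀ x : C, (f x : L) = (x : L)⁺)
    (hsurj : Function.Surjective f) : IsCompressive f := by
  intro y V hV hyV
  obtain ⟨W, hW, rfl⟩ := isOpen_induced_iff.mp hV
  obtain ⟨V', hV', hyV', hV'W⟩ := exists_isOpen_forall_abs_sub_le_mem hsolid (hW.mem_nhds hyV)
  obtain ⟨c, rfl⟩ := hsurj y
  refine ⟨Subtype.val ⁻¹' V', hyV', ?_⟩
  refine hC.isCompressivePair_of_segment (hV'.preimage continuous_subtype_val) hV
    (fun d hd => hV'W d hd d le_rfl) hyV' fun x z hx hz => ?_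
  rw [mem_preimage, hf] at hx ⊢
  rw [segment_symm] at hz
  exact hV'W _ hx _ (by simpa only [hf] using abs_posPart_sub_le_of_mem_segment hz)

end TopologicalVectorLattice

theorem stmt_4_general {L : Type*} [AddCommGroup L] [Lattice L] [Module ℝ L]
    [TopologicalSpace L] [IsTopologicalAddGroup L] [ContinuousSMul ℝ L]
    (hadd : ∀ x y z : L, x ≤ y → x + z ≤ y + z)
    (hsmul : ∀ (α : ℝ) (x y : L), 0 ≤ α → x ≤ y → α • x ≤ α • y)
    (hsup : Continuous fun p : L × L => p.1 ⊔ p.2)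
    (hsolid : ∀ U ∈ nhds (0 : L), ∃ S ∈ nhds (0 : L), S ⊆ U ∧
      ∀ x y : L, y ∈ S → (x ⊔ 0) - (x ⊓ 0) ≤ (y ⊔ 0) - (y ⊓ 0) → x ∈ S)
    (u : L → L) (hu : ∀ x, u x = x ⊔ 0)
    (C : Set L) (hC : Convex ℝ C)
    (D : Set L) (hD : D = u '' C)
    (f : C → D) (hf : ∀ x : C, (f x : L) = u (x : L)) :
    Continuous f ∧ Function.Surjective f ∧ IsCompressive f := by
  have : IsOrderedAddMonoid L := { add_le_add_left := fun x y h z => hadd x y z h }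
  have : PosSMulMono ℝ L := ⟨fun α hα x y h => hsmul α x y hα h⟩
  have : ContinuousSup L := ⟨hsup⟩
  have hf' : ∀ x : C, (f x : L) = (x : L)⁺ := fun x => (hf x).trans (hu x)
  have hsolid' : ∀ U ∈ 𝓝 (0 : L), ∃ S ∈ 𝓝 (0 : L), S ⊆ U ∧
      ∀ x y : L, y ∈ S → |x| ≤ |y| → x ∈ S := by
    simpa only [sup_sub_inf_eq_abs_sub, zero_sub, abs_neg] using hsolid
  have hsurj : Function.Surjective f := by
    rintro ⟨d, hd⟩
    obtain ⟨c, hc, rfl⟩ := hD ▸ hd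
    exact ⟨⟨c, hc⟩, Subtype.ext (hf _)⟩
  refine ⟨continuous_induced_rng.2 ?_, hsurj, hC.isCompressive_posPart hsolid' hf' hsurj⟩
  exact (continuous_subtype_val.sup continuous_const).congr fun x => (hf' x).symm

/-- **Lemma 2.1.** Let `L` be a topological vector lattice, `u x = x ⊔ 0`,
`C ⊆ L` convex, and `D = u(C)` with the subspace topology.  Then
`u|_C : C → D` is a compressive continuous surjection. -/
theorem stmt_4 {L : Type*} [AddCommGroup L] [Lattice L] [Module ℝ L]
    [TopologicalSpace L] [IsTopologicalAddGroup L] [ContinuousSMul ℝ L]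
    (hadd : ∀ x y z : L, x ≤ y → x + z ≤ y + z)
    (hsmul : ∀ (α : ℝ) (x y : L), 0 ≤ α → x ≤ y → α • x ≤ α • y)
    (hsup : Continuous fun p : L × L => p.1 ⊔ p.2)
    (hinf : Continuous fun p : L × L => p.1 ⊓ p.2)
    (hsolid : ∀ U ∈ nhds (0 : L), ∃ S ∈ nhds (0 : L), S ⊆ U ∧
      ∀ x y : L, y ∈ S → (x ⊔ 0) - (x ⊓ 0) ≤ (y ⊔ 0) - (y ⊓ 0) → x ∈ S)
    (u : L → L) (hu : ∀ x, u x = x ⊔ 0)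
    (C : Set L) (hC : Convex ℝ C)
    (D : Set L) (hD : D = u '' C)
    (f : C → D) (hf : ∀ x : C, (f x : L) = u (x : L)) :
    Continuous f ∧ Function.Surjective f ∧ IsCompressive f :=
  stmt_4_general hadd hsmul hsup hsolid u hu C hC D hD f hf
end

section
/- Let Y be a metric space, X a topological space, and f : X → Y a compressive continuous surjection. For any open cover 𝒰 of Y there is a compressive cover 𝒱 for f such that V ∈ 𝒰 for every pair (V', V) ∈ 𝒱. -/
/-- A compressive cover for `f` is a collection of compressive pairs whose first
components form a locally finite open cover of `Y`. -/
def IsCompressiveCover {X Y : Type*} [TopologicalSpace X] [TopologicalSpace Y]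
    (f : X → Y) (𝒱 : Set (Set Y × Set Y)) : Prop :=
  (∀ p ∈ 𝒱, IsCompressivePair f p.1 p.2) ∧
  (⋃ p ∈ 𝒱, p.1) = Set.univ ∧
  LocallyFinite fun p : 𝒱 => p.1.1

/-- For any open cover `𝒰` of a metric space `Y` and compressive continuous
surjection `f : X → Y`, there is a compressive cover `𝒱` for `f` with `V ∈ 𝒰`
for every `(V', V) ∈ 𝒱`. -/
theorem stmt_8 {X Y : Type*} [TopologicalSpace X] [MetricSpace Y]
    (f : X → Y) (hfc : Continuous f) (hfs : Function.Surjective f)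
    (hcomp : IsCompressive f)
    (𝒰 : Set (Set Y)) (h𝒰o : ∀ U ∈ 𝒰, IsOpen U) (h𝒰c : ⋃₀ 𝒰 = Set.univ) :
    ∃ 𝒱 : Set (Set Y × Set Y), IsCompressiveCover f 𝒱 ∧ ∀ p ∈ 𝒱, p.2 ∈ 𝒰 := by
  have h1 : ∀ y : Y, ∃ U ∈ 𝒰, y ∈ U := fun y =>
    Set.mem_sUnion.mp (h𝒰c.symm ▸ Set.mem_univ y)
  choose U hUmem hyU using h1
  have h2 : ∀ y : Y, ∃ V', y ∈ V' ∧ IsCompressivePair f V' (U y) := fun y =>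
    hcomp y (U y) (h𝒰o _ (hUmem y)) (hyU y)
  choose V' hyV' hpair using h2
  have hcover : ⋃ y, V' y = Set.univ := by
    apply Set.eq_univ_of_forall fun y => Set.mem_iUnion.mpr ⟨y, hyV' y⟩
  obtain ⟨v, hvo, hvcov, hvlf, hvsub⟩ :=
    precise_refinement V' (fun y => (hpair y).1) hcover
  refine ⟨Set.range (fun y => (v y, U y)), ⟨?_, ?_, ?_⟩, ?_⟩
  · rintro p ⟨y, rfl⟩
    obtain ⟨hV'o, hVo, hsub, ξ, hξc, hξ0, c, hξ1⟩ := hpair y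
    refine ⟨hvo y, hVo, (hvsub y).trans hsub, fun p =>
      ξ (⟨p.1, Set.preimage_mono (hvsub y) p.1.2⟩, p.2), ?_, ?_, c, ?_⟩
    · exact hξc.comp ((((continuous_subtype_val.comp continuous_fst).subtype_mk _)).prodMk continuous_snd)
    · intro x; exact hξ0 _
    · intro x; exact hξ1 _
  · apply Set.eq_univ_of_forall fun y => ?_
    have : y ∈ ⋃ z, v z := hvcov ▸ Set.mem_univ y
    obtain ⟨z, hz⟩ := Set.mem_iUnion.mp this
    exact Set.mem_biUnion ⟨z, rfl⟩ hz
  · intro x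
    obtain ⟨N, hN, hfin⟩ := hvlf x
    refine ⟨N, hN, ?_⟩
    have := hfin.image (fun y =>
      (⟨(v y, U y), ⟨y, rfl⟩⟩ : Set.range (fun y => (v y, U y))))
    apply this.subset
    rintro ⟨p, y, rfl⟩ hne
    exact ⟨y, hne, rfl⟩
  · rintro p ⟨y, rfl⟩
    exact hUmem y
end

section
/- Let Y be a metric space, X a topological space, and f : X → Y a compressive continuous surjection. For any compressive cover 𝒱 for f there is a compressive cover 𝒱̃ for f that star refines 𝒱. -/
/-- `𝒲` star refines `𝒱` if for each `(Ṽ', Ṽ) ∈ 𝒲` there is `(V', V) ∈ 𝒱`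
such that the union of all `Ṽ₀` over pairs `(Ṽ₀', Ṽ₀) ∈ 𝒲` with
`Ṽ₀ ∩ Ṽ ≠ ∅` is contained in `V'`. -/
def StarRefines {Y : Type*} (𝒲 𝒱 : Set (Set Y × Set Y)) : Prop :=
  ∀ q ∈ 𝒲, ∃ p ∈ 𝒱,
    (⋃ q₀ ∈ {q₀ ∈ 𝒲 | q₀.2 ∩ q.2 ≠ ∅}, q₀.2) ⊆ p.1

/-!
Let `ρ z` be the radius (capped at `1`) of the largest ball about `z` contained in some `V'` with
`(V', V) ∈ 𝒱`. It is positive and `1`-Lipschitz, so two balls `B(w, ρ w / 8)` and `B(z, ρ z / 8)`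
that meet have `B(w, ρ w / 8) ⊆ B(z, ρ z / 2)`, which lies in one such `V'`. Compressiveness gives
compressive pairs `(U z, B(z, ρ z / 8))` with `z ∈ U z`, and paracompactness of the metric space `Y`
shrinks the `U z` to a locally finite open cover.
-/

open Set Metric
open scoped ENNReal

lemma IsCompressivePair.mono_left {X Y : Type*} [TopologicalSpace X] [TopologicalSpace Y]
    {f : X → Y} {V' V R : Set Y} (h : IsCompressivePair f V' V)
    (hR : IsOpen R) (hRV' : R ⊆ V') : IsCompressivePair f R V := by
  obtain ⟨-, hV, hV'V, ξ, hξ, hξ0, c, hξ1⟩ := h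
  refine ⟨hR, hV, hRV'.trans hV'V, fun q => ξ (⟨q.1, hRV' q.1.2⟩, q.2), ?_,
    fun _ => hξ0 _, c, fun _ => hξ1 _⟩
  fun_prop

namespace Metric

variable {Y ι : Type*} [PseudoMetricSpace Y]

/-- The cap at `1` keeps it finite even when some `U i` is `univ`. -/
noncomputable def coverRadius (U : ι → Set Y) (z : Y) : ℝ≥0∞ :=
  ⨆ i, min 1 (infEDist z (U i)ᶜ)

lemma coverRadius_le_one (U : ι → Set Y) (z : Y) : coverRadius U z ≤ 1 :=
  iSup_le fun _ => min_le_left _ _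

lemma coverRadius_ne_top (U : ι → Set Y) (z : Y) : coverRadius U z ≠ ∞ :=
  ((coverRadius_le_one U z).trans_lt ENNReal.one_lt_top).ne

lemma coverRadius_pos {U : ι → Set Y} (hU : ∀ i, IsOpen (U i)) (hUc : ⋃ i, U i = univ)
    (z : Y) : 0 < coverRadius U z := by
  obtain ⟨i, hzi⟩ := mem_iUnion.1 (hUc ▸ mem_univ z)
  have hz : z ∉ closure (U i)ᶜ := by
    rwa [(hU i).isClosed_compl.closure_eq, notMem_compl_iff]
  exact (lt_min one_pos (infEDist_pos_iff_notMem_closure.2 hz)).trans_le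
    (le_iSup (fun i => min 1 (infEDist z (U i)ᶜ)) i)

lemma coverRadius_le_add_edist (U : ι → Set Y) (x y : Y) :
    coverRadius U x ≤ coverRadius U y + edist x y := by
  refine iSup_le fun i => ?_
  calc min 1 (infEDist x (U i)ᶜ)
      ≤ min (1 + edist x y) (infEDist y (U i)ᶜ + edist x y) :=
        min_le_min le_self_add infEDist_le_infEDist_add_edist
    _ = min 1 (infEDist y (U i)ᶜ) + edist x y := min_add_add_right _ _ _
    _ ≤ coverRadius U y + edist x y := by
        gcongr
        exact le_iSup (fun i => min 1 (infEDist y (U i)ᶜ)) i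

lemma exists_ball_subset_of_lt_coverRadius {U : ι → Set Y} {z : Y} {r : ℝ}
    (hr : ENNReal.ofReal r < coverRadius U z) : ∃ i, ball z r ⊆ U i := by
  obtain ⟨i, hi⟩ := lt_iSup_iff.1 hr
  refine ⟨i, fun x hx => ?_⟩
  have hdisj := disjoint_closedEBall_of_lt_infEDist (hi.trans_le (min_le_right _ _))
  by_contra hxU
  rw [← eball_ofReal] at hx
  exact hdisj.ne_of_mem (eball_subset_closedEBall hx) hxU rfl

lemma ball_subset_ball_of_inter_nonempty {ρ : Y → ℝ} (hρ : ∀ w z, ρ w ≤ ρ z + dist w z)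
    {w z : Y} (h : (ball w (ρ w / 8) ∩ ball z (ρ z / 8)).Nonempty) :
    ball w (ρ w / 8) ⊆ ball z (ρ z / 2) := by
  obtain ⟨x, hxw, hxz⟩ := h
  intro y hy
  rw [mem_ball] at hxw hxz hy ⊢
  have hwz : dist w z < ρ w / 8 + ρ z / 8 := by
    linarith [dist_triangle_left w z x]
  linarith [hρ w z, dist_triangle y w z, dist_nonneg (x := x) (y := z)]

lemma exists_pos_radius_star_subset {U : ι → Set Y} (hU : ∀ i, IsOpen (U i))
    (hUc : ⋃ i, U i = univ) :
    ∃ r : Y → ℝ, (∀ z, 0 < r z) ∧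
      ∀ z, ∃ i, ∀ w, (ball w (r w) ∩ ball z (r z)).Nonempty → ball w (r w) ⊆ U i := by
  set ρ : Y → ℝ := fun z => (coverRadius U z).toReal
  have hρ_pos z : 0 < ρ z :=
    ENNReal.toReal_pos (coverRadius_pos hU hUc z).ne' (coverRadius_ne_top U z)
  have hρ_le w z : ρ w ≤ ρ z + dist w z := by
    have := ENNReal.toReal_mono (ENNReal.add_ne_top.2 ⟨coverRadius_ne_top U z, edist_ne_top w z⟩)
      (coverRadius_le_add_edist U w z)
    rwa [ENNReal.toReal_add (coverRadius_ne_top U z) (edist_ne_top w z), ← dist_edist] at this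
  refine ⟨fun z => ρ z / 8, fun z => by have := hρ_pos z; positivity, fun z => ?_⟩
  have hlt : ENNReal.ofReal (ρ z / 2) < coverRadius U z :=
    (ENNReal.ofReal_lt_iff_lt_toReal (by have := hρ_pos z; positivity)
      (coverRadius_ne_top U z)).2 (by linarith [hρ_pos z])
  obtain ⟨i, hi⟩ := exists_ball_subset_of_lt_coverRadius hlt
  exact ⟨i, fun w hwz => (ball_subset_ball_of_inter_nonempty hρ_le hwz).trans hi⟩

end Metric

lemma isCompressiveCover_range {X Y ι : Type*} [TopologicalSpace X] [TopologicalSpace Y]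
    {f : X → Y} {V' V : ι → Set Y} (hpair : ∀ i, IsCompressivePair f (V' i) (V i))
    (hcov : ⋃ i, V' i = univ) (hlf : LocallyFinite V') :
    IsCompressiveCover f (range fun i => (V' i, V i)) := by
  refine ⟨?_, by rwa [biUnion_range], .of_comp_surjective rangeFactorization_surjective hlf⟩
  rintro _ ⟨i, rfl⟩
  exact hpair i

lemma IsCompressive.exists_isCompressiveCover {X Y : Type*} [TopologicalSpace X]
    [TopologicalSpace Y] [ParacompactSpace Y] {f : X → Y} (hf : IsCompressive f)
    {V : Y → Set Y} (hV : ∀ z, IsOpen (V z)) (hzV : ∀ z, z ∈ V z) :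
    ∃ V' : Y → Set Y, IsCompressiveCover f (range fun z => (V' z, V z)) := by
  choose U hzU hUV using fun z => hf z (V z) (hV z) (hzV z)
  obtain ⟨V', hV'o, hV'c, hV'lf, hV'U⟩ := precise_refinement U (fun z => (hUV z).1)
    (iUnion_eq_univ_iff.2 fun z => ⟨z, hzU z⟩)
  exact ⟨V', isCompressiveCover_range (fun z => (hUV z).mono_left (hV'o z) (hV'U z)) hV'c hV'lf⟩

theorem stmt_9_general {X Y : Type*} [TopologicalSpace X] [MetricSpace Y]
    (f : X → Y)
    (hcomp : IsCompressive f)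
    (𝒱 : Set (Set Y × Set Y)) (h𝒱 : IsCompressiveCover f 𝒱) :
    ∃ 𝒲 : Set (Set Y × Set Y), IsCompressiveCover f 𝒲 ∧ StarRefines 𝒲 𝒱 := by
  obtain ⟨h𝒱pair, h𝒱cov, -⟩ := h𝒱
  obtain ⟨r, hr, hstar⟩ := exists_pos_radius_star_subset (U := fun p : 𝒱 => p.1.1)
    (fun p => (h𝒱pair p p.2).1) ((iUnion_subtype _ _).trans h𝒱cov)
  obtain ⟨V', h𝒲⟩ :=
    hcomp.exists_isCompressiveCover (fun _ => isOpen_ball) (fun z => mem_ball_self (hr z))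
  refine ⟨_, h𝒲, ?_⟩
  rintro _ ⟨z, rfl⟩
  obtain ⟨p, hp⟩ := hstar z
  refine ⟨p, p.2, iUnion₂_subset ?_⟩
  rintro _ ⟨⟨w, rfl⟩, hwz⟩
  exact hp w (nonempty_iff_ne_empty.2 hwz)

/-- **Lemma 2.2.** For any compressive cover `𝒱` for a compressive continuous
surjection `f : X → Y` onto a metric space, there is a compressive cover `𝒲`
for `f` that star refines `𝒱`. -/
theorem stmt_9 {X Y : Type*} [TopologicalSpace X] [MetricSpace Y]
    (f : X → Y) (hfc : Continuous f) (hfs : Function.Surjective f)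
    (hcomp : IsCompressive f)
    (𝒱 : Set (Set Y × Set Y)) (h𝒱 : IsCompressiveCover f 𝒱) :
    ∃ 𝒲 : Set (Set Y × Set Y), IsCompressiveCover f 𝒲 ∧ StarRefines 𝒲 𝒱 :=
  stmt_9_general f hcomp 𝒱 h𝒱
end

section
/- Let N be a real normed vector space, X ⊆ N a compact subset, U_X ⊆ N an open neighborhood of X, and r_X : U_X → X a continuous retraction (r_X restricted to X is the identity). Let Y be a Hausdorff topological space, f : X → Y a continuous map, and y ∈ Y such that f⁻¹(y) is nonempty and path connected. Then for any open set V ⊆ Y containing y there is an open set V' ⊆ V containing y such that any two points of f⁻¹(V') can be joined by a path in f⁻¹(V); equivalently, any function η∂ : {-1,1} → f⁻¹(V') extends to a continuous η : [-1,1] → f⁻¹(V). -/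
/-- **Lemma 4.2.** Let `X` be a compact subset of a real normed space `N`,
`r_X : U_X → X` a continuous retraction of an open neighborhood `U_X` of `X`,
`Y` Hausdorff, `f : X → Y` continuous, and `y ∈ Y` with `f⁻¹(y)` nonempty and
path connected.  Then for any open `V ∋ y` there is an open `V' ⊆ V` containing
`y` such that any two points of `f⁻¹(V')` are joined by a path in `f⁻¹(V)`. -/
theorem stmt_13 {N : Type*} [NormedAddCommGroup N] [NormedSpace ℝ N]
    {Y : Type*} [TopologicalSpace Y] [T2Space Y]
    (X : Set N) (hX : IsCompact X)
    (UX : Set N) (hUXo : IsOpen UX) (hXUX : X ⊆ UX)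
    (rX : N → N) (hrc : ContinuousOn rX UX) (hrmem : ∀ z ∈ UX, rX z ∈ X)
    (hrid : ∀ z ∈ X, rX z = z)
    (f : X → Y) (hf : Continuous f) (y : Y)
    (hne : (f ⁻¹' {y}).Nonempty) (hpc : IsPathConnected (f ⁻¹' {y}))
    (V : Set Y) (hVo : IsOpen V) (hyV : y ∈ V) :
    ∃ V' : Set Y, IsOpen V' ∧ y ∈ V' ∧ V' ⊆ V ∧
      ∀ a b : X, a ∈ f ⁻¹' V' → b ∈ f ⁻¹' V' → JoinedIn (f ⁻¹' V) a b := by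
  classical
  obtain ⟨x0, hx0⟩ := hne
  haveI : CompactSpace X := isCompact_iff_compactSpace.mp hX
  set r' : N → X := fun z => if h : z ∈ UX then ⟨rX z, hrmem z h⟩ else x0 with hr'
  have hr'val : ∀ z ∈ UX, (r' z : N) = rX z := by
    intro z hz; simp [hr', hz]
  have hr'cont : ContinuousOn r' UX := by
    rw [Topology.IsInducing.subtypeVal.continuousOn_iff]
    exact hrc.congr hr'val
  have hfix : ∀ x : X, r' (x : N) = x := by
    intro x
    apply Subtype.ext
    rw [hr'val _ (hXUX x.2)]
    exact hrid _ x.2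
  set g : N → Y := fun z => f (r' z) with hg
  have hgc : ContinuousOn g UX := hf.comp_continuousOn hr'cont
  set O : Set N := UX ∩ g ⁻¹' V with hO
  have hOopen : IsOpen O := hgc.isOpen_inter_preimage hUXo hVo
  set K' : Set N := Subtype.val '' (f ⁻¹' {y}) with hK'
  have hK'cpt : IsCompact K' :=
    ((isClosed_singleton.preimage hf).isCompact).image continuous_subtype_val
  have hK'O : K' ⊆ O := by
    rintro z ⟨x, hx, rfl⟩
    refine ⟨hXUX x.2, ?_⟩
    show g (x : N) ∈ V
    have : g (x : N) = f x := by rw [hg]; simp [hfix x]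
    rw [this]
    simp only [Set.mem_preimage, Set.mem_singleton_iff] at hx
    rw [hx]; exact hyV
  obtain ⟨ε, εpos, hth⟩ := hK'cpt.exists_thickening_subset_open hOopen hK'O
  set S : Set X := Subtype.val ⁻¹' Metric.thickening ε K' with hS
  have hSopen : IsOpen S := Metric.isOpen_thickening.preimage continuous_subtype_val
  set C : Set Y := f '' Sᶜ with hC
  have hCclosed : IsClosed C :=
    ((hSopen.isClosed_compl.isCompact).image hf).isClosed
  refine ⟨V ∩ Cᶜ, hVo.inter hCclosed.isOpen_compl, ⟨hyV, ?_⟩, Set.inter_subset_left, ?_⟩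
  · rintro ⟨x, hxS, hfx⟩
    apply hxS
    have hxK : x ∈ f ⁻¹' {y} := by simpa using hfx
    exact Metric.self_subset_thickening εpos K' ⟨x, hxK, rfl⟩
  · have key : ∀ c : X, c ∈ f ⁻¹' (V ∩ Cᶜ) → ∃ kc ∈ f ⁻¹' {y}, JoinedIn (f ⁻¹' V) c kc := by
      intro c hc
      have hcS : c ∈ S := by
        by_contra h
        exact hc.2 ⟨c, h, rfl⟩
      obtain ⟨k, hkK', hdk⟩ := Metric.mem_thickening_iff.mp hcS
      obtain ⟨kc, hkc, rfl⟩ := hkK'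
      set line : ℝ → N := fun t => (1 - t) • (c : N) + t • (kc : N) with hline
      have hlineball : ∀ t : unitInterval, line (t : ℝ) ∈ Metric.ball (kc : N) ε := by
        intro t
        exact (convex_ball (kc : N) ε) (Metric.mem_ball.mpr hdk)
          (Metric.mem_ball_self εpos) (by linarith [t.2.2]) t.2.1 (by ring)
      have hlineO : ∀ t : unitInterval, line (t : ℝ) ∈ O := fun t =>
        hth (Metric.ball_subset_thickening (show (kc:N) ∈ K' from ⟨kc, hkc, rfl⟩) ε (hlineball t))
      have hlinecont : Continuous fun t : unitInterval => line (t : ℝ) := by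
        simp only [hline]; fun_prop
      have γcont : Continuous fun t : unitInterval => r' (line (t : ℝ)) :=
        hr'cont.comp_continuous hlinecont fun t => (hlineO t).1
      exact ⟨kc, hkc,
        { toFun := fun t => r' (line (t : ℝ))
          continuous_toFun := γcont
          source' := by
            show r' (line 0) = c
            have : line 0 = (c : N) := by simp [hline]
            rw [this]; exact hfix c
          target' := by
            show r' (line 1) = kc
            have : line 1 = (kc : N) := by simp [hline]
            rw [this]; exact hfix kc },
        fun t => (hlineO t).2⟩
    intro a b ha hb
    obtain ⟨ka, hka, JIa⟩ := key a ha
    obtain ⟨kb, hkb, JIb⟩ := key b hb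
    have hsub : f ⁻¹' {y} ⊆ f ⁻¹' V := fun x hx => by
      simp only [Set.mem_preimage, Set.mem_singleton_iff] at hx
      simp only [Set.mem_preimage, hx]; exact hyV
    exact (JIa.trans ((hpc.joinedIn ka hka kb hkb).mono hsub)).trans JIb.symm
end

section
/- Let Z be a Hausdorff locally convex topological real vector space, K ⊆ Z a convex subset, U ⊆ K a relatively open subset of K, A ⊆ U a subset that is metrizable in the subspace topology, and r : U → A a continuous retraction (r restricted to A is the identity). Then A is an absolute neighborhood retract. -/
universe u

/-- A topological space `X` is an absolute neighborhood retract (ANR) if whenever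
it is embedded as a closed subset of a metric space `Z`, some open neighborhood of
the image retracts onto the image. -/
def IsANR (X : Type u) [TopologicalSpace X] : Prop :=
  ∀ (Z : Type u) [MetricSpace Z] (e : X → Z),
    Topology.IsEmbedding e → IsClosed (Set.range e) →
      ∃ (U : Set Z) (r : Z → Z), IsOpen U ∧ Set.range e ⊆ U ∧
        ContinuousOn r U ∧ (∀ z ∈ U, r z ∈ Set.range e) ∧ ∀ z ∈ Set.range e, r z = z

/-!
Embed `A` as a closed subset `C = e(A)` of a metric space `M`. By Dugundji's extension theorem
the map `e⁻¹ : C → A ⊆ Z` extends to a continuous `F : M → Z` whose values lie in the convex hull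
of `A`, hence in `K`. Writing `U = O ∩ K` with `O` open, `F⁻¹(O)` is an open neighbourhood of `C`
that `F` maps into `U`, and `e ∘ r ∘ F` retracts it onto `C`.
-/

open Set Metric Topology

theorem isANR_of_exists_leftInverse {X : Type u} [TopologicalSpace X]
    (h : ∀ (M : Type u) [MetricSpace M] (e : X → M), IsEmbedding e → IsClosed (range e) →
      (range e).Nonempty → ∃ V : Set M, IsOpen V ∧ range e ⊆ V ∧
        ∃ p : V → X, Continuous p ∧ ∀ x (hx : e x ∈ V), p ⟨e x, hx⟩ = x) :
    IsANR X := by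
  classical
  intro M _ e he hclosed
  rcases (range e).eq_empty_or_nonempty with hempty | hne
  · exact ⟨∅, id, isOpen_empty, by simp [hempty], continuousOn_empty _, by simp, by simp [hempty]⟩
  obtain ⟨V, hV, heV, p, hp, hpe⟩ := h M e he hclosed hne
  refine ⟨V, fun z => if hz : z ∈ V then e (p ⟨z, hz⟩) else z, hV, heV, ?_, ?_, ?_⟩
  · rw [continuousOn_iff_continuous_domRestrict]
    convert he.continuous.comp hp using 1
    funext z
    simp [z.2]
  · intro z hz
    simp [hz]
  · rintro _ ⟨x, rfl⟩
    simp [heV ⟨x, rfl⟩, hpe]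

section Dugundji

variable {M : Type*} [MetricSpace M]
  {E : Type*} [AddCommGroup E] [Module ℝ E] [TopologicalSpace E] [LocallyConvexSpace ℝ E]

theorem continuousAt_of_forall_mem_convex {C : Set M} {f : C → E} (hf : Continuous f)
    {F : M → E} (hFC : ∀ c : C, F c = f c) {κ : ℝ} (hκ : 1 ≤ κ)
    (hF : ∀ x ∈ C, ∀ y ∉ C, ∀ t : Set E, Convex ℝ t →
      (∀ c : C, dist (c : M) x < κ * dist y x → f c ∈ t) → F y ∈ t)
    {x : M} (hx : x ∈ C) : ContinuousAt F x := by
  rw [ContinuousAt, (LocallyConvexSpace.convex_basis (𝕜 := ℝ) (F x)).tendsto_right_iff]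
  rintro W ⟨hW, hWconv⟩
  have hfW : ∀ᶠ c in 𝓝 (⟨x, hx⟩ : C), f c ∈ W := hf.continuousAt (hFC ⟨x, hx⟩ ▸ hW)
  obtain ⟨δ, hδ, hδW⟩ := Metric.eventually_nhds_iff.1 hfW
  have hκδ : δ / κ ≤ δ := div_le_self hδ.le hκ
  filter_upwards [Metric.ball_mem_nhds x (div_pos hδ (by linarith : (0 : ℝ) < κ))] with y hy
  rw [mem_ball] at hy
  by_cases hyC : y ∈ C
  · exact hFC ⟨y, hyC⟩ ▸ hδW (show dist y x < δ by linarith)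
  · refine hF x hx y hyC W hWconv fun c hc => hδW ?_
    calc dist (c : M) x < κ * dist y x := hc
      _ < κ * (δ / κ) := by gcongr
      _ = δ := by field_simp

variable [ContinuousAdd E] [ContinuousSMul ℝ E]

/-- **Dugundji's extension theorem.** -/
theorem IsClosed.exists_continuous_extension_mem_convexHull {C : Set M} (hC : IsClosed C)
    (hne : C.Nonempty) {f : C → E} (hf : Continuous f) :
    ∃ F : M → E, Continuous F ∧ (∀ c : C, F c = f c) ∧ ∀ x, F x ∈ convexHull ℝ (range f) := by
  classical
  -- Off `C`, the value at `y` is built only from values of `f` at points of `C` within twice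
  -- the distance from `y` to `C`; this is what makes the extension continuous along `C`.
  let t : (Cᶜ : Set M) → Set E := fun y =>
    convexHull ℝ (f '' {c | dist (c : M) y < 2 * infDist (y : M) C})
  have hloc : ∀ y₀ : (Cᶜ : Set M), ∃ v : E, ∀ᶠ y in 𝓝 y₀, v ∈ t y := by
    intro y₀
    have hpos : 0 < infDist (y₀ : M) C := (hC.notMem_iff_infDist_pos hne).1 y₀.2
    obtain ⟨c, hcC, hc⟩ := (infDist_lt_iff hne).1 (lt_two_mul_self hpos)
    have hnear : ∀ᶠ y in 𝓝 (y₀ : M), dist c y < 2 * infDist y C :=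
      (isOpen_lt (by fun_prop) (by fun_prop)).mem_nhds (show dist c y₀ < _ by rwa [dist_comm])
    exact ⟨f ⟨c, hcC⟩, ((continuous_subtype_val.tendsto y₀).eventually hnear).mono
      fun y hy => subset_convexHull ℝ _ ⟨⟨c, hcC⟩, hy, rfl⟩⟩
  obtain ⟨g, hg⟩ := exists_continuous_forall_mem_convex_of_local_const
    (fun y => convex_convexHull ℝ _) hloc
  let F : M → E := fun x => if h : x ∈ C then f ⟨x, h⟩ else g ⟨x, h⟩
  have hFC : ∀ c : C, F c = f c := fun c => dif_pos c.2
  have hFg : ∀ y : (Cᶜ : Set M), F y = g y := fun y => dif_neg y.2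
  refine ⟨F, continuous_iff_continuousAt.2 fun x => ?_, hFC, fun x => ?_⟩
  · by_cases hx : x ∈ C
    · refine continuousAt_of_forall_mem_convex hf hFC (by norm_num : (1 : ℝ) ≤ 3)
        (fun x hx y hy s hs hfs => ?_) hx
      rw [hFg ⟨y, hy⟩]
      refine convexHull_min ?_ hs (hg ⟨y, hy⟩)
      rintro _ ⟨c, hc, rfl⟩
      refine hfs c ?_
      have hcy : dist (c : M) y < 2 * infDist y C := hc
      have hyx : infDist y C ≤ dist y x := infDist_le_dist_of_mem hx
      calc dist (c : M) x ≤ dist (c : M) y + dist y x := dist_triangle _ _ _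
        _ < 3 * dist y x := by linarith
    · have hcont : ContinuousOn F Cᶜ := by
        rw [continuousOn_iff_continuous_domRestrict]
        convert g.continuous using 1
        exact funext hFg
      exact hcont.continuousAt (hC.isOpen_compl.mem_nhds hx)
  · by_cases hx : x ∈ C
    · exact hFC ⟨x, hx⟩ ▸ subset_convexHull ℝ _ (mem_range_self _)
    · exact hFg ⟨x, hx⟩ ▸ convexHull_mono (image_subset_range _ _) (hg ⟨x, hx⟩)

end Dugundji

theorem stmt_15_general {Z : Type u} [AddCommGroup Z] [Module ℝ Z] [TopologicalSpace Z]
    [IsTopologicalAddGroup Z] [ContinuousSMul ℝ Z] [LocallyConvexSpace ℝ Z]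
    (K : Set Z) (hK : Convex ℝ K)
    (U : Set Z) (hUopen : ∃ O : Set Z, IsOpen O ∧ U = O ∩ K)
    (A : Set Z) (hAU : A ⊆ U)
    (r : Z → Z) (hrc : ContinuousOn r U) (hrmem : ∀ z ∈ U, r z ∈ A)
    (hrid : ∀ z ∈ A, r z = z) :
    IsANR A := by
  obtain ⟨O, hO, rfl⟩ := hUopen
  refine isANR_of_exists_leftInverse fun M _ e he hclosed hne => ?_
  let f : range e → Z := fun c => (he.toHomeomorph.symm c : Z)
  have hfe : ∀ a : A, f ⟨e a, a, rfl⟩ = a := fun a =>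
    congrArg Subtype.val (he.toHomeomorph.symm_apply_apply a)
  have hf : Continuous f := continuous_subtype_val.comp he.toHomeomorph.symm.continuous
  obtain ⟨F, hF, hFf, hFhull⟩ := hclosed.exists_continuous_extension_mem_convexHull hne hf
  have hFK : ∀ x, F x ∈ K := fun x =>
    convexHull_min (by rintro _ ⟨c, rfl⟩; exact (hAU (he.toHomeomorph.symm c).2).2) hK (hFhull x)
  have hFU : ∀ x ∈ F ⁻¹' O, F x ∈ O ∩ K := fun x hx => ⟨hx, hFK x⟩
  refine ⟨F ⁻¹' O, hO.preimage hF, ?_, fun x => ⟨r (F x), hrmem _ (hFU x x.2)⟩, ?_, ?_⟩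
  · rintro _ ⟨a, rfl⟩
    show F (e a) ∈ O
    rw [hFf ⟨e a, a, rfl⟩, hfe a]
    exact (hAU a.2).1
  · exact (hrc.comp_continuous (hF.comp continuous_subtype_val) fun x => hFU x.1 x.2).subtype_mk _
  · intro a _
    ext
    simp only [hFf ⟨e a, a, rfl⟩, hfe a, hrid a a.2]

/-- **Lemma 3.1.** If `Z` is a Hausdorff locally convex topological real vector
space, `K ⊆ Z` is convex, `U ⊆ K` is relatively open in `K`, `A ⊆ U` is
metrizable, and `r : U → A` is a continuous retraction, then `A` is an ANR. -/
theorem stmt_15 {Z : Type u} [AddCommGroup Z] [Module ℝ Z] [TopologicalSpace Z]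
    [IsTopologicalAddGroup Z] [ContinuousSMul ℝ Z] [LocallyConvexSpace ℝ Z]
    [T2Space Z]
    (K : Set Z) (hK : Convex ℝ K)
    (U : Set Z) (hUK : U ⊆ K) (hUopen : ∃ O : Set Z, IsOpen O ∧ U = O ∩ K)
    (A : Set Z) (hAU : A ⊆ U) (hAmet : TopologicalSpace.MetrizableSpace A)
    (r : Z → Z) (hrc : ContinuousOn r U) (hrmem : ∀ z ∈ U, r z ∈ A)
    (hrid : ∀ z ∈ A, r z = z) :
    IsANR A :=
  stmt_15_general K hK U hUopen A hAU r hrc hrmem hrid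
end
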